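/- arXiv:1711.01907 — 2 statements merged into one kernel-verified Lean document; each statement's English description precedes it below -/
import Mathlib

section
/- Let R be a commutative ring, q ∈ R, A a commutative R-algebra and y ∈ A. On the free A-module A⟨ξ⟩ with basis (ξ^{[n]})_{n∈ℕ}, the multiplication rule ξ^{[m]} ξ^{[n]} = Σ_{i=0}^{min(m,n)} (−1)^i q^{i(i−1)/2} (m+n−i choose m)_q (m choose i)_q y^i ξ^{[m+n−i]} defines a structure of commutative (associative, unital, with unit ξ^{[0]}) A-algebra; the A-linear map A[ξ] → A⟨ξ⟩ sending the twisted power ξ^{(n)} to (n)_q! ξ^{[n]} is a morphism of A-algebras; and for every n ∈ ℕ the A-submodule I^{[n+1]} spanned by the ξ^{[k]} with k > n is an ideal of A⟨ξ⟩. -/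
def qInt {R : Type*} [CommRing R] (q : R) (m : ℕ) : R := ∑ i ∈ Finset.range m, q ^ i

def qFact {R : Type*} [CommRing R] (q : R) : ℕ → R
  | 0 => 1
  | n + 1 => qFact q n * qInt q (n + 1)

def qChoose {R : Type*} [CommRing R] (q : R) : ℕ → ℕ → R
  | _, 0 => 1
  | 0, _ + 1 => 0
  | n + 1, k + 1 => qChoose q n k + q ^ (k + 1) * qChoose q n (k + 1)

noncomputable def twistedPow {A : Type*} [CommRing A] (q y : A) (n : ℕ) : Polynomial A :=
  ∏ i ∈ Finset.range n, (Polynomial.X + Polynomial.C (qInt q i * y))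

/-- The coefficient `(−1)^i q^{i(i−1)/2} (m+n−i choose m)_q (m choose i)_q y^i` appearing in the
multiplication rule of the twisted divided power polynomial ring. -/
def dpCoeff {A : Type*} [CommRing A] (q y : A) (m n i : ℕ) : A :=
  (-1 : A) ^ i * q ^ (i * (i - 1) / 2) * qChoose q (m + n - i) m * qChoose q m i * y ^ i

/-!
The twisted powers `ξ^{(n)}` are monic of degree `n`, hence span `A[ξ]`, and they multiply as
`ξ^{(m)} ξ^{(n)} = Σ_i c_i ξ^{(m+n-i)}` with
`c_i = (-1)^i q^{i(i-1)/2} (i)_q! (m choose i)_q (n choose i)_q y^i`. Since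
`(m)_q! (n)_q! dpCoeff_i = c_i (m+n-i)_q!`, every linear `T` with `T ξ^{(n)} = (n)_q! ξ^{[n]}` is
multiplicative. If `A` is a domain in which no `(n)_q!` vanishes, the twisted powers are a basis,
so such a `T` exists, and commutativity and associativity of `A[ξ]` pass to `A⟨ξ⟩` after
cancelling q-factorials. The general case is the base change of the universal one,
`q = X₀, y = X₁` over `ℤ[X₀, X₁]`, where `(n)_q!` is nonzero because it specializes to `n!` at
`q = 1`.
-/

open Finset Polynomial

section QArithmetic

variable {R : Type*} [CommRing R] (q : R)

@[simp] lemma qInt_zero : qInt q 0 = 0 := by simp [qInt]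

@[simp] lemma qInt_one : qInt q 1 = 1 := by simp [qInt]

lemma qInt_add (a b : ℕ) : qInt q (a + b) = qInt q a + q ^ a * qInt q b := by
  simp [qInt, sum_range_add, mul_sum, pow_add]

lemma qInt_succ (n : ℕ) : qInt q (n + 1) = qInt q n + q ^ n := by
  simp [qInt_add]

lemma qInt_mul_sub_one (n : ℕ) : qInt q n * (q - 1) = q ^ n - 1 := geom_sum_mul q n

@[simp] lemma qFact_zero : qFact q 0 = 1 := rfl

lemma qFact_succ (n : ℕ) : qFact q (n + 1) = qFact q n * qInt q (n + 1) := rfl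

@[simp] lemma qChoose_zero_right (n : ℕ) : qChoose q n 0 = 1 := by cases n <;> rfl

lemma qChoose_succ_succ (n k : ℕ) :
    qChoose q (n + 1) (k + 1) = qChoose q n k + q ^ (k + 1) * qChoose q n (k + 1) := rfl

lemma qChoose_eq_zero_of_lt : ∀ {n k : ℕ}, n < k → qChoose q n k = 0
  | 0, _ + 1, _ => rfl
  | n + 1, k + 1, h => by
    rw [qChoose_succ_succ, qChoose_eq_zero_of_lt (by omega), qChoose_eq_zero_of_lt (by omega)]
    ring

@[simp] lemma qChoose_self : ∀ n : ℕ, qChoose q n n = 1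
  | 0 => rfl
  | n + 1 => by
    rw [qChoose_succ_succ, qChoose_self n, qChoose_eq_zero_of_lt q n.lt_succ_self]
    ring

lemma qChoose_one_right : ∀ n : ℕ, qChoose q n 1 = qInt q n
  | 0 => qChoose_eq_zero_of_lt q zero_lt_one
  | n + 1 => by
    rw [qChoose_succ_succ, qChoose_zero_right, qChoose_one_right n, add_comm n, qInt_add,
      qInt_one, pow_one]

lemma qInt_succ_mul_qChoose_succ : ∀ {m i : ℕ}, i ≤ m →
    qInt q (i + 1) * qChoose q m (i + 1) = qInt q (m - i) * qChoose q m i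
  | 0, 0, _ => by simp [qChoose_eq_zero_of_lt]
  | m + 1, 0, _ => by simp [qChoose_one_right]
  | m + 1, j + 1, h => by
    obtain rfl | hjm := eq_or_lt_of_le (Nat.le_of_succ_le_succ h)
    · simp [qChoose_eq_zero_of_lt]
    have ih₁ := qInt_succ_mul_qChoose_succ (m := m) (i := j + 1) hjm
    have ih₂ := qInt_succ_mul_qChoose_succ (m := m) (i := j) (by omega)
    obtain ⟨d, rfl⟩ : ∃ d, m = j + 1 + d := ⟨m - (j + 1), by omega⟩
    simp only [show j + 1 + d - (j + 1) = d by omega, show j + 1 + d - j = d + 1 by omega,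
      show j + 1 + d + 1 - (j + 1) = d + 1 by omega, qInt_succ] at ih₁ ih₂ ⊢
    rw [qChoose_succ_succ, qChoose_succ_succ]
    linear_combination q ^ (j + 1 + 1) * ih₁ + ih₂ +
      q ^ (j + 1) * qChoose q (j + 1 + d) (j + 1) * qInt_mul_sub_one q d

lemma qFact_mul_qFact_mul_qChoose : ∀ {n k : ℕ}, k ≤ n →
    qFact q k * qFact q (n - k) * qChoose q n k = qFact q n
  | _, 0, _ => by simp
  | n + 1, k + 1, h => by
    obtain rfl | hkn := eq_or_lt_of_le (Nat.le_of_succ_le_succ h)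
    · simp
    have ih₁ := qFact_mul_qFact_mul_qChoose (n := n) (k := k) hkn.le
    have ih₂ := qFact_mul_qFact_mul_qChoose (n := n) (k := k + 1) hkn
    obtain ⟨d, rfl⟩ : ∃ d, n = k + 1 + d := ⟨n - (k + 1), by omega⟩
    have hsplit := qInt_add q (k + 1) (d + 1)
    simp only [show k + 1 + d - k = d + 1 by omega, show k + 1 + d - (k + 1) = d by omega,
      show k + 1 + d + 1 - (k + 1) = d + 1 by omega, show k + 1 + (d + 1) = k + 1 + d + 1 by omega,
      qFact_succ] at ih₁ ih₂ hsplit ⊢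
    rw [qChoose_succ_succ]
    linear_combination qInt q (k + 1) * ih₁ + q ^ (k + 1) * qInt q (d + 1) * ih₂ -
      qFact q (k + 1 + d) * hsplit

end QArithmetic

section TwistedPowers

variable {A : Type*} [CommRing A] (q y : A)

@[simp] lemma twistedPow_zero : twistedPow q y 0 = 1 := prod_range_zero _

lemma twistedPow_succ (n : ℕ) :
    twistedPow q y (n + 1) = twistedPow q y n * (X + C (qInt q n * y)) :=
  prod_range_succ _ n

lemma twistedPow_mul_X_add_C (n j : ℕ) :
    twistedPow q y j * (X + C (qInt q n * y)) =
      twistedPow q y (j + 1) + ((qInt q n - qInt q j) * y) • twistedPow q y j := by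
  rw [twistedPow_succ, smul_eq_C_mul, sub_mul, map_sub]
  ring

lemma monic_twistedPow (n : ℕ) : (twistedPow q y n).Monic :=
  monic_prod_of_monic _ _ fun _ _ ↦ monic_X_add_C _

lemma natDegree_twistedPow [Nontrivial A] (n : ℕ) : (twistedPow q y n).natDegree = n := by
  simp only [twistedPow, natDegree_prod_of_monic _ _ fun _ _ ↦ monic_X_add_C _, natDegree_X_add_C,
    sum_const, card_range, smul_eq_mul, mul_one]

/-- The coefficient of `ξ^{(m+n-i)}` in `ξ^{(m)} ξ^{(n)}`. -/
def twistedMulCoeff (m n i : ℕ) : A :=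
  (-1 : A) ^ i * q ^ (i * (i - 1) / 2) * qFact q i * qChoose q m i * qChoose q n i * y ^ i

@[simp] lemma twistedMulCoeff_zero (m n : ℕ) : twistedMulCoeff q y m n 0 = 1 := by
  simp [twistedMulCoeff]

lemma twistedMulCoeff_eq_zero_of_lt_left {m i : ℕ} (h : m < i) (n : ℕ) :
    twistedMulCoeff q y m n i = 0 := by
  simp [twistedMulCoeff, qChoose_eq_zero_of_lt q h]

lemma twistedMulCoeff_eq_zero_of_lt_right {n i : ℕ} (h : n < i) (m : ℕ) :
    twistedMulCoeff q y m n i = 0 := by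
  simp [twistedMulCoeff, qChoose_eq_zero_of_lt q h]

lemma twistedMulCoeff_succ_succ {n i : ℕ} (hin : i ≤ n) (m : ℕ) :
    twistedMulCoeff q y m (n + 1) (i + 1) = twistedMulCoeff q y m n (i + 1) +
      twistedMulCoeff q y m n i * ((qInt q n - qInt q (m + n - i)) * y) := by
  rcases lt_or_ge m i with hmi | him
  · simp [twistedMulCoeff_eq_zero_of_lt_left q y hmi, twistedMulCoeff_eq_zero_of_lt_left q y
      (hmi.trans i.lt_succ_self)]
  have habs_m := qInt_succ_mul_qChoose_succ q him
  have habs_n := qInt_succ_mul_qChoose_succ q hin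
  have hdiff : qInt q (m + n - i) = qInt q n + q ^ (n - i) * q ^ i * qInt q (m - i) := by
    rw [← pow_add, Nat.sub_add_cancel hin, show m + n - i = n + (m - i) by omega, qInt_add]
  have htri : (i + 1) * (i + 1 - 1) / 2 = i * (i - 1) / 2 + i := by
    rw [← Nat.choose_two_right, ← Nat.choose_two_right, Nat.choose_succ_succ, Nat.choose_one_right,
      add_comm]
  rw [twistedMulCoeff, twistedMulCoeff, twistedMulCoeff, hdiff, htri, pow_add, qFact_succ,
    qChoose_succ_succ q n i]
  linear_combination (-1 : A) ^ (i + 1) * q ^ (i * (i - 1) / 2) * qFact q i * y ^ (i + 1) * q ^ i *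
    (q ^ (n - i) * qChoose q n i * habs_m
      + (q - 1) * qInt q (i + 1) * qChoose q m (i + 1) * habs_n
      + qInt q (i + 1) * qChoose q m (i + 1) * qChoose q n i * qInt_mul_sub_one q (n - i)
      - qInt q (i + 1) * qChoose q m (i + 1) * qChoose q n (i + 1) * qInt_mul_sub_one q (i + 1))

theorem twistedPow_mul_twistedPow (m : ℕ) : ∀ n : ℕ, twistedPow q y m * twistedPow q y n =
    ∑ i ∈ range (n + 1), twistedMulCoeff q y m n i • twistedPow q y (m + n - i)
  | 0 => by simp
  | n + 1 => by
    have hshift : ∑ i ∈ range (n + 1), twistedMulCoeff q y m n i • twistedPow q y (m + n - i + 1) =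
        twistedPow q y (m + n + 1) +
          ∑ i ∈ range (n + 1), twistedMulCoeff q y m n (i + 1) • twistedPow q y (m + n - i) := by
      rw [sum_range_succ', sum_range_succ (fun i ↦ twistedMulCoeff q y m n (i + 1) • _),
        twistedMulCoeff_eq_zero_of_lt_right q y n.lt_succ_self, zero_smul, add_zero,
        twistedMulCoeff_zero, one_smul, add_comm]
      congr 1
      refine sum_congr rfl fun i hi ↦ ?_
      rw [show m + n - (i + 1) + 1 = m + n - i by grind]
    calc twistedPow q y m * twistedPow q y (n + 1)
        = ∑ i ∈ range (n + 1), twistedMulCoeff q y m n i •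
            (twistedPow q y (m + n - i) * (X + C (qInt q n * y))) := by
          simp only [twistedPow_succ q y n, ← mul_assoc, twistedPow_mul_twistedPow m n, sum_mul,
            smul_mul_assoc]
      _ = ∑ i ∈ range (n + 1), (twistedMulCoeff q y m n i • twistedPow q y (m + n - i + 1) +
            (twistedMulCoeff q y m n i * ((qInt q n - qInt q (m + n - i)) * y)) •
              twistedPow q y (m + n - i)) := by
          simp only [twistedPow_mul_X_add_C, smul_add, smul_smul]
      _ = twistedPow q y (m + n + 1) + ∑ i ∈ range (n + 1), (twistedMulCoeff q y m n (i + 1) +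
            twistedMulCoeff q y m n i * ((qInt q n - qInt q (m + n - i)) * y)) •
              twistedPow q y (m + n - i) := by
          simp only [sum_add_distrib, hshift, add_smul, add_assoc]
      _ = ∑ i ∈ range (n + 1 + 1), twistedMulCoeff q y m (n + 1) i •
            twistedPow q y (m + (n + 1) - i) := by
          rw [sum_range_succ' (fun i ↦ twistedMulCoeff q y m (n + 1) i • _), twistedMulCoeff_zero,
            one_smul, add_comm, ← add_assoc]
          congr 1
          refine sum_congr rfl fun i hi ↦ ?_
          rw [twistedMulCoeff_succ_succ q y (by grind), show m + n + 1 - (i + 1) = m + n - i by omega]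

end TwistedPowers

open Finsupp

section DividedPowerMul

variable {A : Type*} [CommRing A] (q y : A)

noncomputable def dpProd (m n : ℕ) : ℕ →₀ A :=
  ∑ i ∈ range (min m n + 1), dpCoeff q y m n i • single (m + n - i) 1

noncomputable def dpMul : (ℕ →₀ A) →ₗ[A] (ℕ →₀ A) →ₗ[A] (ℕ →₀ A) :=
  linearCombination A fun m ↦ linearCombination A (dpProd q y m)

lemma dpMul_single_single (m n : ℕ) (a b : A) :
    dpMul q y (single m a) (single n b) = (a * b) • dpProd q y m n := by
  rw [dpMul, linearCombination_single, LinearMap.smul_apply, linearCombination_single, smul_smul]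

@[simp] lemma dpMul_single_one_single_one (m n : ℕ) :
    dpMul q y (single m 1) (single n 1) = dpProd q y m n := by
  rw [dpMul_single_single, mul_one, one_smul]

lemma qFact_mul_qFact_mul_dpCoeff {m n i : ℕ} (him : i ≤ m) (hin : i ≤ n) :
    qFact q m * qFact q n * dpCoeff q y m n i = twistedMulCoeff q y m n i * qFact q (m + n - i) := by
  have hn := qFact_mul_qFact_mul_qChoose q hin
  have hmn := qFact_mul_qFact_mul_qChoose q (show m ≤ m + n - i by omega)
  rw [show m + n - i - m = n - i by omega] at hmn
  rw [dpCoeff, twistedMulCoeff]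
  linear_combination (-1 : A) ^ i * q ^ (i * (i - 1) / 2) * y ^ i * qChoose q m i *
    (qFact q i * qChoose q n i * hmn - qFact q m * qChoose q (m + n - i) m * hn)

lemma qFact_mul_qFact_smul_dpProd (m n : ℕ) :
    (qFact q m * qFact q n) • dpProd q y m n = ∑ i ∈ range (n + 1),
      (twistedMulCoeff q y m n i * qFact q (m + n - i)) • single (m + n - i) (1 : A) := by
  rw [dpProd, Finset.smul_sum]
  refine sum_subset_zero_on_sdiff (range_subset_range.2 (by omega)) (fun i hi ↦ ?_)
    (fun i hi ↦ ?_)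
  · rw [mem_sdiff, mem_range, mem_range] at hi
    rw [twistedMulCoeff_eq_zero_of_lt_left q y (by omega), zero_mul, zero_smul]
  · rw [mem_range] at hi
    rw [smul_smul, qFact_mul_qFact_mul_dpCoeff q y (by omega) (by omega)]

lemma dpProd_zero_left (n : ℕ) : dpProd q y 0 n = single n 1 := by
  rw [dpProd, Nat.zero_min, zero_add, sum_range_one, dpCoeff]
  simp

lemma dpMul_one_left (f : ℕ →₀ A) : dpMul q y (single 0 1) f = f := by
  have : dpMul q y (single 0 1) = LinearMap.id := by
    ext n : 2
    simp [dpProd_zero_left]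
  rw [this, LinearMap.id_apply]

lemma dpProd_mem_span {n k : ℕ} (hk : n < k) (m : ℕ) :
    dpProd q y m k ∈ Submodule.span A {x : ℕ →₀ A | ∃ k > n, x = single k 1} := by
  refine Submodule.sum_mem _ fun i hi ↦ Submodule.smul_mem _ _ (Submodule.subset_span ?_)
  rw [mem_range] at hi
  exact ⟨m + k - i, by omega, rfl⟩

lemma dpMul_mem_span (n : ℕ) (g : ℕ →₀ A) {f : ℕ →₀ A}
    (hf : f ∈ Submodule.span A {x : ℕ →₀ A | ∃ k > n, x = single k 1}) :
    dpMul q y g f ∈ Submodule.span A {x : ℕ →₀ A | ∃ k > n, x = single k 1} := by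
  set S := Submodule.span A {x : ℕ →₀ A | ∃ k > n, x = single k 1}
  have hgen {k : ℕ} (hk : n < k) : dpMul q y g (single k 1) ∈ S := by
    induction g using Finsupp.induction_linear with
    | zero => rw [map_zero, LinearMap.zero_apply]; exact S.zero_mem
    | add g₁ g₂ h₁ h₂ => rw [map_add, LinearMap.add_apply]; exact S.add_mem h₁ h₂
    | single m b => rw [dpMul_single_single]; exact S.smul_mem _ (dpProd_mem_span q y hk m)
  have hS : S ≤ S.comap (dpMul q y g) := Submodule.span_le.2 fun _ ⟨_, hk, hx⟩ ↦ hx ▸ hgen hk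
  exact hS hf

end DividedPowerMul

section Morphism

variable {A : Type*} [CommRing A] (q y : A)

noncomputable def twistedPowSeq [Nontrivial A] : Polynomial.Sequence A where
  elems' := twistedPow q y
  degree_eq' n := by
    rw [degree_eq_natDegree (monic_twistedPow q y n).ne_zero, natDegree_twistedPow]

lemma span_range_twistedPow : Submodule.span A (Set.range (twistedPow q y)) = ⊤ := by
  cases subsingleton_or_nontrivial A
  · exact Subsingleton.elim _ _
  · exact (twistedPowSeq q y).span fun n ↦ (monic_twistedPow q y n).leadingCoeff ▸ isUnit_one

theorem map_mul_eq_dpMul (T : A[X] →ₗ[A] (ℕ →₀ A))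
    (hT : ∀ n, T (twistedPow q y n) = qFact q n • single n 1) (f g : A[X]) :
    T (f * g) = dpMul q y (T f) (T g) := by
  have hbasis (a b : ℕ) : T (twistedPow q y a * twistedPow q y b) =
      dpMul q y (T (twistedPow q y a)) (T (twistedPow q y b)) := by
    simp only [twistedPow_mul_twistedPow, map_sum, map_smul, hT, LinearMap.smul_apply,
      dpMul_single_one_single_one, smul_smul]
    rw [mul_comm (qFact q b), qFact_mul_qFact_smul_dpProd]
  have hspan := span_range_twistedPow q y
  have : (LinearMap.mul A A[X]).compr₂ T = (dpMul q y).compl₁₂ T T :=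
    LinearMap.ext_on_range hspan fun a ↦ LinearMap.ext_on_range hspan fun b ↦ hbasis a b
  exact LinearMap.congr_fun₂ this f g

end Morphism

section Domain

variable {A : Type*} [CommRing A] [IsDomain A] (q y : A)

lemma exists_linearMap_twistedPow_eq : ∃ T : A[X] →ₗ[A] (ℕ →₀ A),
    ∀ n, T (twistedPow q y n) = qFact q n • single n 1 := by
  let b := (twistedPowSeq q y).basis fun n ↦ (monic_twistedPow q y n).leadingCoeff ▸ isUnit_one
  refine ⟨b.constr A fun n ↦ qFact q n • single n 1, fun n ↦ ?_⟩
  have h := b.constr_basis A (fun n ↦ qFact q n • single n (1 : A)) n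
  rwa [show b n = twistedPow q y n from Polynomial.Sequence.basis_eq_self _ _ n] at h

variable {q}

lemma dpMul_single_comm_of_isDomain (hq : ∀ n, qFact q n ≠ 0) (m n : ℕ) :
    dpMul q y (single m 1) (single n 1) = dpMul q y (single n 1) (single m 1) := by
  obtain ⟨T, hT⟩ := exists_linearMap_twistedPow_eq q y
  have h := congrArg T (mul_comm (twistedPow q y m) (twistedPow q y n))
  simp only [map_mul_eq_dpMul q y T hT, hT, map_smul, LinearMap.smul_apply, smul_smul] at h
  rw [mul_comm (qFact q n)] at h
  exact smul_right_injective _ (mul_ne_zero (hq m) (hq n)) h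

lemma dpMul_single_assoc_of_isDomain (hq : ∀ n, qFact q n ≠ 0) (l m n : ℕ) :
    dpMul q y (dpMul q y (single l 1) (single m 1)) (single n 1) =
      dpMul q y (single l 1) (dpMul q y (single m 1) (single n 1)) := by
  obtain ⟨T, hT⟩ := exists_linearMap_twistedPow_eq q y
  have h := congrArg T (mul_assoc (twistedPow q y l) (twistedPow q y m) (twistedPow q y n))
  simp only [map_mul_eq_dpMul q y T hT, hT, map_smul, LinearMap.smul_apply, smul_smul] at h
  rw [← mul_assoc] at h
  exact smul_right_injective _ (mul_ne_zero (mul_ne_zero (hq n) (hq m)) (hq l)) h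

end Domain

section BaseChange

variable {A B : Type*} [CommRing A] [CommRing B] (φ : A →+* B)

lemma map_qInt (q : A) (m : ℕ) : φ (qInt q m) = qInt (φ q) m := by
  simp [qInt]

lemma map_qFact (q : A) : ∀ n, φ (qFact q n) = qFact (φ q) n
  | 0 => map_one φ
  | n + 1 => by rw [qFact_succ, qFact_succ, map_mul, map_qFact q n, map_qInt]

lemma map_qChoose (q : A) : ∀ n k, φ (qChoose q n k) = qChoose (φ q) n k
  | n, 0 => by simp
  | 0, k + 1 => by
    rw [qChoose_eq_zero_of_lt q k.succ_pos, qChoose_eq_zero_of_lt _ k.succ_pos, map_zero]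
  | n + 1, k + 1 => by
    simp only [qChoose_succ_succ, map_add, map_mul, map_pow, map_qChoose q n]

lemma map_dpCoeff (q y : A) (m n i : ℕ) :
    φ (dpCoeff q y m n i) = dpCoeff (φ q) (φ y) m n i := by
  simp [dpCoeff, map_qChoose]

lemma mapRange_dpProd (q y : A) (m n : ℕ) :
    mapRange φ (map_zero φ) (dpProd q y m n) = dpProd (φ q) (φ y) m n := by
  simp [dpProd, mapRange_finsetSum, map_dpCoeff]

lemma mapRange_dpMul (q y : A) (u v : ℕ →₀ A) :
    mapRange φ (map_zero φ) (dpMul q y u v) =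
      dpMul (φ q) (φ y) (mapRange φ (map_zero φ) u) (mapRange φ (map_zero φ) v) := by
  induction u using Finsupp.induction_linear with
  | zero => simp
  | add u₁ u₂ h₁ h₂ => simp only [map_add, LinearMap.add_apply, mapRange_add' (f := φ), h₁, h₂]
  | single m a =>
    induction v using Finsupp.induction_linear with
    | zero => simp
    | add v₁ v₂ h₁ h₂ => simp only [map_add, mapRange_add' (f := φ), h₁, h₂]
    | single n b =>
      rw [mapRange_single, mapRange_single, dpMul_single_single, dpMul_single_single,
        mapRange_smul' _ (φ (a * b)) _ fun x ↦ map_mul φ (a * b) x, mapRange_dpProd, map_mul]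

end BaseChange

section General

lemma qFact_one_int (n : ℕ) : qFact (1 : ℤ) n = n.factorial := by
  induction n with
  | zero => rfl
  | succ n ih => simp [qFact_succ, ih, qInt, Nat.factorial_succ, mul_comm]

lemma qFact_X_ne_zero (n : ℕ) : qFact (MvPolynomial.X 0 : MvPolynomial (Fin 2) ℤ) n ≠ 0 := by
  intro h
  have h₁ := congrArg (MvPolynomial.eval fun _ ↦ (1 : ℤ)) h
  rw [map_qFact, MvPolynomial.eval_X, map_zero, qFact_one_int] at h₁
  exact n.factorial_ne_zero (by exact_mod_cast h₁)

variable {A : Type*} [CommRing A] (q y : A)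

lemma mapRange_aeval_dpMul (u v : ℕ →₀ MvPolynomial (Fin 2) ℤ) :
    mapRange (MvPolynomial.aeval ![q, y]) (map_zero _)
        (dpMul (MvPolynomial.X 0) (MvPolynomial.X 1) u v) =
      dpMul q y (mapRange (MvPolynomial.aeval ![q, y]) (map_zero _) u)
        (mapRange (MvPolynomial.aeval ![q, y]) (map_zero _) v) := by
  simpa using mapRange_dpMul (MvPolynomial.aeval ![q, y]).toRingHom (MvPolynomial.X 0)
    (MvPolynomial.X 1) u v

lemma dpMul_single_comm (m n : ℕ) :
    dpMul q y (single m 1) (single n 1) = dpMul q y (single n 1) (single m 1) := by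
  simpa only [mapRange_aeval_dpMul, mapRange_single, map_one] using
    congrArg (mapRange (MvPolynomial.aeval ![q, y]) (map_zero _))
      (dpMul_single_comm_of_isDomain (MvPolynomial.X 1) qFact_X_ne_zero m n)

lemma dpMul_single_assoc (l m n : ℕ) :
    dpMul q y (dpMul q y (single l 1) (single m 1)) (single n 1) =
      dpMul q y (single l 1) (dpMul q y (single m 1) (single n 1)) := by
  simpa only [mapRange_aeval_dpMul, mapRange_single, map_one] using
    congrArg (mapRange (MvPolynomial.aeval ![q, y]) (map_zero _))
      (dpMul_single_assoc_of_isDomain (MvPolynomial.X 1) qFact_X_ne_zero l m n)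

theorem dpMul_comm (f g : ℕ →₀ A) : dpMul q y f g = dpMul q y g f := by
  have : dpMul q y = (dpMul q y).flip := by
    ext m n : 4
    simpa using dpMul_single_comm q y m n
  exact LinearMap.congr_fun₂ this f g

theorem dpMul_assoc (f g h : ℕ →₀ A) :
    dpMul q y (dpMul q y f g) h = dpMul q y f (dpMul q y g h) := by
  have : (dpMul q y).compr₂ (dpMul q y) =
      (LinearMap.llcomp A _ _ _ ∘ₗ dpMul q y).compl₂ (dpMul q y) := by
    ext l m n : 6
    simpa using dpMul_single_assoc q y l m n
  exact LinearMap.congr_fun (LinearMap.congr_fun₂ this f g) h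

end General

/-- On the free `A`-module `A⟨ξ⟩ = ℕ →₀ A` with basis `ξ^{[n]} = single n 1`, the multiplication
rule `ξ^{[m]} ξ^{[n]} = Σ_i dpCoeff q y m n i • ξ^{[m+n−i]}` extends to an `A`-bilinear,
commutative, associative multiplication with unit `ξ^{[0]}`; the `A`-linear map `A[ξ] → A⟨ξ⟩`
with `ξ^{(n)} ↦ (n)_q! ξ^{[n]}` is multiplicative (a morphism of `A`-algebras); and each
submodule `I^{[n+1]}` spanned by the `ξ^{[k]}` with `k > n` is an ideal. -/
theorem statement3 {R A : Type*} [CommRing R] [CommRing A] [Algebra R A] (q : R) (y : A) :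
    ∃ mul : (ℕ →₀ A) →ₗ[A] (ℕ →₀ A) →ₗ[A] (ℕ →₀ A),
      (∀ m n : ℕ, mul (Finsupp.single m 1) (Finsupp.single n 1) =
        ∑ i ∈ Finset.range (min m n + 1),
          dpCoeff (algebraMap R A q) y m n i • Finsupp.single (m + n - i) (1 : A)) ∧
      (∀ f g : ℕ →₀ A, mul f g = mul g f) ∧
      (∀ f g h : ℕ →₀ A, mul (mul f g) h = mul f (mul g h)) ∧
      (∀ f : ℕ →₀ A, mul (Finsupp.single 0 1) f = f) ∧
      (∀ T : Polynomial A →ₗ[A] (ℕ →₀ A),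
        (∀ n : ℕ, T (twistedPow (algebraMap R A q) y n) =
          qFact (algebraMap R A q) n • Finsupp.single n (1 : A)) →
        ∀ f g : Polynomial A, T (f * g) = mul (T f) (T g)) ∧
      (∀ n : ℕ, ∀ f g : ℕ →₀ A,
        f ∈ Submodule.span A {x : ℕ →₀ A | ∃ k > n, x = Finsupp.single k (1 : A)} →
        mul g f ∈ Submodule.span A {x : ℕ →₀ A | ∃ k > n, x = Finsupp.single k (1 : A)}) :=
  ⟨dpMul (algebraMap R A q) y, dpMul_single_one_single_one _ y, dpMul_comm _ y, dpMul_assoc _ y,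
    dpMul_one_left _ y, map_mul_eq_dpMul _ y, fun n _ g hf ↦ dpMul_mem_span _ y n g hf⟩
end

section
/- Let R be a commutative ring, q ∈ R, A a commutative R-algebra, x ∈ A, y := (1−q)x, and fix an integer p ≥ 1. For n, i ∈ ℕ define the p-Frobenius coefficient A_{n,i} := Σ_{j=0}^{n} (−1)^{n−j} t^{p(n−j)(n−j−1)/2} (n choose j)_{t^p} (pj choose i)_t ∈ ℤ[t]. Then in A[ξ], for every n ∈ ℕ: ∏_{k=0}^{n−1}((x + ξ)^p − q^{pk} x^p) = Σ_{i=0}^{pn} A_{n,i}(q) x^{pn−i} ξ^{(i)}, where ξ^{(i)} := ∏_{j=0}^{i−1}(ξ + (j)_q y). -/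
/-- The `p`-Frobenius coefficients
`A_{n,i} := Σ_{j=0}^{n} (−1)^{n−j} t^{p(n−j)(n−j−1)/2} (n choose j)_{t^p} (pj choose i)_t`
in `ℤ[t]`. -/
noncomputable def frobCoeff (p n i : ℕ) : Polynomial ℤ :=
  ∑ j ∈ Finset.range (n + 1),
    (-1 : Polynomial ℤ) ^ (n - j) * Polynomial.X ^ (p * ((n - j) * (n - j - 1) / 2)) *
      qChoose ((Polynomial.X : Polynomial ℤ) ^ p) n j *
      qChoose (Polynomial.X : Polynomial ℤ) (p * j) i

lemma qChoose_eq_zero {R : Type*} [CommRing R] (q : R) : ∀ n k : ℕ, n < k → qChoose q n k = 0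
  | _, 0, h => absurd h (Nat.not_lt_zero _)
  | 0, _ + 1, _ => rfl
  | n + 1, k + 1, h => by
    simp [qChoose, qChoose_eq_zero q n k (by omega), qChoose_eq_zero q n (k+1) (by omega)]

lemma qChoose_zero {R : Type*} [CommRing R] (q : R) (n : ℕ) : qChoose q n 0 = 1 := by
  cases n <;> simp [qChoose]

lemma map_qChoose_s15 {R S : Type*} [CommRing R] [CommRing S] (f : R →+* S) (q : R) :
    ∀ n k : ℕ, f (qChoose q n k) = qChoose (f q) n k
  | _, 0 => by simp [qChoose]
  | 0, _ + 1 => by simp [qChoose]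
  | n + 1, k + 1 => by
    simp [qChoose, map_qChoose_s15 f q n k, map_qChoose_s15 f q n (k + 1)]

lemma tri (m : ℕ) : (m + 1) * m / 2 = m * (m - 1) / 2 + m := by
  have h1 : (m+1).choose 2 = (m+1) * m / 2 := by
    rw [Nat.choose_two_right]; simp
  have h2 : m.choose 2 = m * (m-1) / 2 := Nat.choose_two_right m
  have h3 : (m+1).choose 2 = m.choose 1 + m.choose 2 := Nat.choose_succ_succ m 1
  simp [Nat.choose_one_right] at h3
  omega

lemma key_step {A : Type*} [CommRing A] (q x : A) (i : ℕ) :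
    (Polynomial.C x + Polynomial.X) * twistedPow q ((1 - q) * x) i =
      twistedPow q ((1 - q) * x) (i + 1) +
        Polynomial.C (q ^ i * x) * twistedPow q ((1 - q) * x) i := by
  unfold twistedPow
  rw [Finset.prod_range_succ]
  have h : qInt q i * ((1 - q) * x) = x - q ^ i * x := by
    unfold qInt
    linear_combination (-x) * geom_sum_mul q i
  rw [h, map_sub]
  ring

lemma gauss1 {A : Type*} [CommRing A] (q x : A) (m : ℕ) :
    (Polynomial.C x + Polynomial.X) ^ m =
      ∑ i ∈ Finset.range (m + 1),
        Polynomial.C (qChoose q m i * x ^ (m - i)) * twistedPow q ((1 - q) * x) i := by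
  induction m with
  | zero => simp [qChoose, twistedPow]
  | succ m ih =>
    rw [pow_succ, ih, Finset.sum_mul]
    have expand : ∀ i ∈ Finset.range (m + 1),
        Polynomial.C (qChoose q m i * x ^ (m - i)) * twistedPow q ((1-q)*x) i *
          (Polynomial.C x + Polynomial.X) =
        Polynomial.C (qChoose q m i * x ^ (m - i)) * twistedPow q ((1-q)*x) (i+1) +
          Polynomial.C (q ^ i * x) * (Polynomial.C (qChoose q m i * x ^ (m - i)) *
            twistedPow q ((1-q)*x) i) := by
      intro i _
      rw [mul_comm _ (Polynomial.C x + Polynomial.X), ← mul_assoc, mul_comm _ (Polynomial.C _),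
        mul_assoc, key_step]
      ring
    rw [Finset.sum_congr rfl expand, Finset.sum_add_distrib]
    rw [Finset.sum_range_succ' (fun i => Polynomial.C (q ^ i * x) *
      (Polynomial.C (qChoose q m i * x ^ (m - i)) * twistedPow q ((1-q)*x) i))]
    rw [Finset.sum_range_succ' (fun i => Polynomial.C (qChoose q (m+1) i * x ^ (m + 1 - i)) *
      twistedPow q ((1-q)*x) i)]
    have hc0 : Polynomial.C (q ^ 0 * x) *
        (Polynomial.C (qChoose q m 0 * x ^ (m - 0)) * twistedPow q ((1-q)*x) 0) =
        Polynomial.C (qChoose q (m+1) 0 * x ^ (m + 1 - 0)) * twistedPow q ((1-q)*x) 0 := by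
      simp [qChoose, pow_succ]
      ring
    rw [hc0]
    have hsplit : ∀ i ∈ Finset.range (m + 1),
        Polynomial.C (qChoose q (m+1) (i+1) * x ^ (m + 1 - (i+1))) * twistedPow q ((1-q)*x) (i+1)
        = Polynomial.C (qChoose q m i * x ^ (m - i)) * twistedPow q ((1-q)*x) (i+1)
          + Polynomial.C (q ^ (i+1) * qChoose q m (i+1) * x ^ (m - i)) *
              twistedPow q ((1-q)*x) (i+1) := by
      intro i _
      have : qChoose q (m+1) (i+1) = qChoose q m i + q ^ (i+1) * qChoose q m (i+1) := rfl
      rw [this]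
      have : m + 1 - (i + 1) = m - i := by omega
      rw [this, add_mul, map_add, add_mul]
    rw [Finset.sum_congr rfl hsplit, Finset.sum_add_distrib]
    have hrem : (∑ i ∈ Finset.range (m+1),
        Polynomial.C (q ^ (i+1) * qChoose q m (i+1) * x ^ (m - i)) * twistedPow q ((1-q)*x) (i+1))
        = ∑ i ∈ Finset.range m, Polynomial.C (q ^ (i+1) * x) *
            (Polynomial.C (qChoose q m (i+1) * x ^ (m - (i+1))) * twistedPow q ((1-q)*x) (i+1)) := by
      rw [Finset.sum_range_succ (fun i => Polynomial.C (q ^ (i+1) * qChoose q m (i+1) * x ^ (m - i)) *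
        twistedPow q ((1-q)*x) (i+1))]
      rw [qChoose_eq_zero q m (m+1) (by omega)]
      simp only [mul_zero, zero_mul, Polynomial.C_0, add_zero]
      refine Finset.sum_congr rfl fun i hi => ?_
      have hi' : i < m := Finset.mem_range.1 hi
      have hx : x ^ (m - i) = x ^ (m - (i+1)) * x := by
        rw [← pow_succ]
        congr 1
        omega
      rw [hx]
      simp only [Polynomial.C_mul]
      ring
    rw [hrem]
    ring

lemma gauss2 {B : Type*} [CommRing B] (q Z X : B) (n : ℕ) :
    ∏ k ∈ Finset.range n, (Z - q ^ k * X) =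
      ∑ j ∈ Finset.range (n + 1),
        (-1 : B) ^ (n - j) * q ^ ((n - j) * (n - j - 1) / 2) * qChoose q n j *
          X ^ (n - j) * Z ^ j := by
  induction n with
  | zero => simp [qChoose]
  | succ n ih =>
    rw [Finset.prod_range_succ, ih, Finset.sum_mul]
    have expand : ∀ j ∈ Finset.range (n + 1),
        (-1:B)^(n-j) * q^((n-j)*(n-j-1)/2) * qChoose q n j * X^(n-j) * Z^j * (Z - q^n * X) =
        (-1:B)^(n-j) * q^((n-j)*(n-j-1)/2) * qChoose q n j * X^(n-j) * Z^(j+1)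
        - q^n * ((-1:B)^(n-j) * q^((n-j)*(n-j-1)/2) * qChoose q n j * X^(n-j+1) * Z^j) := by
      intro j _
      ring
    rw [Finset.sum_congr rfl expand, Finset.sum_sub_distrib]
    rw [Finset.sum_range_succ' (fun j => (-1:B)^(n+1-j) * q^((n+1-j)*(n+1-j-1)/2) *
      qChoose q (n+1) j * X^(n+1-j) * Z^j)]
    rw [Finset.sum_range_succ' (fun j => q^n * ((-1:B)^(n-j) * q^((n-j)*(n-j-1)/2) *
      qChoose q n j * X^(n-j+1) * Z^j))]
    have h0 : (-1:B)^(n+1-0) * q^((n+1-0)*(n+1-0-1)/2) * qChoose q (n+1) 0 * X^(n+1-0) * Z^0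
        = -(q^n * ((-1:B)^(n-0) * q^((n-0)*(n-0-1)/2) * qChoose q n 0 * X^(n-0+1) * Z^0)) := by
      have : qChoose q (n+1) 0 = (1:B) := qChoose_zero q (n+1)
      have h1 : qChoose q n 0 = (1:B) := qChoose_zero q n
      have he : (n+1) * (n+1-1) / 2 = n * (n-1) / 2 + n := by simpa using tri n
      simp only [this, h1, Nat.sub_zero, pow_zero, mul_one, he]
      rw [pow_succ (-1:B) n, pow_add q, pow_succ X n]
      ring
    have hsplit : ∀ j ∈ Finset.range (n + 1),
        (-1:B)^(n+1-(j+1)) * q^((n+1-(j+1))*(n+1-(j+1)-1)/2) * qChoose q (n+1) (j+1) *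
          X^(n+1-(j+1)) * Z^(j+1)
        = (-1:B)^(n-j) * q^((n-j)*(n-j-1)/2) * qChoose q n j * X^(n-j) * Z^(j+1)
          + (-1:B)^(n-j) * q^((n-j)*(n-j-1)/2) * (q^(j+1) * qChoose q n (j+1)) *
              X^(n-j) * Z^(j+1) := by
      intro j _
      have h1 : n + 1 - (j + 1) = n - j := by omega
      have h2 : qChoose q (n+1) (j+1) = qChoose q n j + q^(j+1) * qChoose q n (j+1) := rfl
      rw [h1, h2]
      ring
    rw [Finset.sum_congr rfl hsplit, Finset.sum_add_distrib]
    have hrem : (∑ j ∈ Finset.range (n+1), (-1:B)^(n-j) * q^((n-j)*(n-j-1)/2) *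
          (q^(j+1) * qChoose q n (j+1)) * X^(n-j) * Z^(j+1))
        = -∑ j ∈ Finset.range n, q^n * ((-1:B)^(n-(j+1)) * q^((n-(j+1))*(n-(j+1)-1)/2) *
            qChoose q n (j+1) * X^(n-(j+1)+1) * Z^(j+1)) := by
      rw [Finset.sum_range_succ (fun j => (-1:B)^(n-j) * q^((n-j)*(n-j-1)/2) *
        (q^(j+1) * qChoose q n (j+1)) * X^(n-j) * Z^(j+1))]
      rw [qChoose_eq_zero q n (n+1) (by omega)]
      simp only [mul_zero, zero_mul, add_zero]
      rw [← Finset.sum_neg_distrib]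
      refine Finset.sum_congr rfl fun j hj => ?_
      have hj' : j < n := Finset.mem_range.1 hj
      obtain ⟨m, hm⟩ : ∃ m, n - (j+1) = m := ⟨_, rfl⟩
      have hnj : n - j = m + 1 := by omega
      rw [hm, hnj]
      have hsimp : (m+1)*(m+1-1)/2 = m*(m-1)/2 + m := by simpa using tri m
      rw [hsimp, pow_succ (-1:B) m]
      have e4 : q^(m*(m-1)/2 + m) * q^(j+1) = q^n * q^(m*(m-1)/2) := by
        rw [← pow_add, ← pow_add]
        congr 1
        generalize m*(m-1)/2 = e
        omega
      calc (-1:B)^m * -1 * q^(m*(m-1)/2 + m) * (q^(j+1) * qChoose q n (j+1)) * X^(m+1) * Z^(j+1)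
          = ((-1:B)^m * qChoose q n (j+1) * X^(m+1) * Z^(j+1)) *
              -(q^(m*(m-1)/2 + m) * q^(j+1)) := by ring
        _ = _ := by rw [e4]; ring
    rw [hrem, h0]
    ring

lemma aeval_frobCoeff {A : Type*} [CommRing A] (c : A) (p n i : ℕ) :
    Polynomial.aeval c (frobCoeff p n i) =
      ∑ j ∈ Finset.range (n + 1),
        (-1 : A) ^ (n - j) * c ^ (p * ((n - j) * (n - j - 1) / 2)) *
          qChoose (c ^ p) n j * qChoose c (p * j) i := by
  unfold frobCoeff
  rw [map_sum]
  refine Finset.sum_congr rfl fun j _ => ?_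
  have h1 : (Polynomial.aeval c) (qChoose ((Polynomial.X : Polynomial ℤ) ^ p) n j)
      = qChoose (c ^ p) n j := by
    rw [show ((Polynomial.aeval c : Polynomial ℤ →ₐ[ℤ] A) (qChoose ((Polynomial.X : Polynomial ℤ)^p) n j))
      = ((Polynomial.aeval c : Polynomial ℤ →ₐ[ℤ] A) : Polynomial ℤ →+* A) (qChoose ((Polynomial.X : Polynomial ℤ)^p) n j) from rfl,
      map_qChoose_s15]
    simp
  have h2 : (Polynomial.aeval c) (qChoose (Polynomial.X : Polynomial ℤ) (p * j) i)
      = qChoose c (p * j) i := by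
    rw [show ((Polynomial.aeval c : Polynomial ℤ →ₐ[ℤ] A) (qChoose (Polynomial.X : Polynomial ℤ) (p*j) i))
      = ((Polynomial.aeval c : Polynomial ℤ →ₐ[ℤ] A) : Polynomial ℤ →+* A) (qChoose (Polynomial.X : Polynomial ℤ) (p*j) i) from rfl,
      map_qChoose_s15]
    simp
  rw [map_mul, map_mul, map_mul, map_pow, map_pow, Polynomial.aeval_X, h1, h2]
  simp

lemma frobInnerSum {A : Type*} [CommRing A] (c x : A) (p n j : ℕ) (hj : j ≤ n) :
    ∑ i ∈ Finset.range (p * n + 1),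
        Polynomial.C (qChoose c (p * j) i * x ^ (p * n - i)) * twistedPow c ((1 - c) * x) i
      = Polynomial.C (x ^ (p * (n - j))) * (Polynomial.C x + Polynomial.X) ^ (p * j) := by
  have hsub : Finset.range (p * j + 1) ⊆ Finset.range (p * n + 1) := by
    apply Finset.range_subset_range.2
    have := Nat.mul_le_mul_left p hj
    omega
  have hzero : ∀ i ∈ Finset.range (p * n + 1), i ∉ Finset.range (p * j + 1) →
      Polynomial.C (qChoose c (p * j) i * x ^ (p * n - i)) * twistedPow c ((1 - c) * x) i = 0 := by
    intro i _ hsi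
    have : p * j < i := by
      simp only [Finset.mem_range] at hsi
      omega
    rw [qChoose_eq_zero c (p * j) i this]
    simp
  rw [← Finset.sum_subset hsub hzero]
  rw [gauss1 c x (p * j), Finset.mul_sum]
  refine Finset.sum_congr rfl fun i hi => ?_
  have hi' : i ≤ p * j := by
    have := Finset.mem_range.1 hi
    omega
  have h1 : p * (n - j) + p * j = p * n := by
    rw [← Nat.mul_add, Nat.sub_add_cancel hj]
  have hx : x ^ (p * n - i) = x ^ (p * (n - j)) * x ^ (p * j - i) := by
    rw [← pow_add]
    congr 1
    generalize p * (n - j) = a at h1 ⊢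
    generalize p * j = b at h1 hi' ⊢
    generalize p * n = e at h1 ⊢
    omega
  rw [hx]
  simp only [Polynomial.C_mul]
  ring

/-- With `y := (1−q)x`, in `A[ξ]` one has, for every `n`,
`∏_{k=0}^{n−1}((x + ξ)^p − q^{pk} x^p) = Σ_{i=0}^{pn} A_{n,i}(q) x^{pn−i} ξ^{(i)}`. -/
theorem statement15 {R A : Type*} [CommRing R] [CommRing A] [Algebra R A]
    (q : R) (x : A) (p : ℕ) (hp : 1 ≤ p) (n : ℕ) :
    ∏ k ∈ Finset.range n,
        ((Polynomial.C x + Polynomial.X) ^ p -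
          Polynomial.C ((algebraMap R A q) ^ (p * k) * x ^ p)) =
      ∑ i ∈ Finset.range (p * n + 1),
        Polynomial.C (Polynomial.aeval (algebraMap R A q) (frobCoeff p n i) * x ^ (p * n - i)) *
          twistedPow (algebraMap R A q) ((1 - algebraMap R A q) * x) i := by
  set c : A := algebraMap R A q with hc
  -- rewrite LHS via gauss2
  have hL : (∏ k ∈ Finset.range n,
      ((Polynomial.C x + Polynomial.X) ^ p - Polynomial.C (c ^ (p * k) * x ^ p)))
      = ∑ j ∈ Finset.range (n + 1),
        (-1 : Polynomial A) ^ (n - j) * (Polynomial.C (c ^ p)) ^ ((n - j) * (n - j - 1) / 2) *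
          qChoose (Polynomial.C (c ^ p)) n j * (Polynomial.C (x ^ p)) ^ (n - j) *
          ((Polynomial.C x + Polynomial.X) ^ p) ^ j := by
    rw [← gauss2 (Polynomial.C (c ^ p)) ((Polynomial.C x + Polynomial.X) ^ p)
      (Polynomial.C (x ^ p)) n]
    refine Finset.prod_congr rfl fun k _ => ?_
    rw [pow_mul, map_mul, map_pow]
  rw [hL]
  -- rewrite RHS
  have hR : ∀ i ∈ Finset.range (p * n + 1),
      Polynomial.C (Polynomial.aeval c (frobCoeff p n i) * x ^ (p * n - i)) *
        twistedPow c ((1 - c) * x) i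
      = ∑ j ∈ Finset.range (n + 1),
          Polynomial.C ((-1 : A) ^ (n - j) * c ^ (p * ((n - j) * (n - j - 1) / 2)) *
            qChoose (c ^ p) n j) *
            (Polynomial.C (qChoose c (p * j) i * x ^ (p * n - i)) *
              twistedPow c ((1 - c) * x) i) := by
    intro i _
    rw [aeval_frobCoeff, Finset.sum_mul, map_sum, Finset.sum_mul]
    refine Finset.sum_congr rfl fun j _ => ?_
    simp only [Polynomial.C_mul]
    ring
  rw [Finset.sum_congr rfl hR, Finset.sum_comm]
  refine Finset.sum_congr rfl fun j hj => ?_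
  have hjn : j ≤ n := by
    have := Finset.mem_range.1 hj
    omega
  rw [← Finset.mul_sum, frobInnerSum c x p n j hjn]
  -- now a pointwise identity
  have e1 : (Polynomial.C (c ^ p)) ^ ((n - j) * (n - j - 1) / 2)
      = Polynomial.C (c ^ (p * ((n - j) * (n - j - 1) / 2))) := by
    rw [← map_pow, ← pow_mul]
  have e2 : qChoose (Polynomial.C (c ^ p)) n j = Polynomial.C (qChoose (c ^ p) n j) :=
    (map_qChoose_s15 (Polynomial.C : A →+* Polynomial A) (c ^ p) n j).symm
  have e3 : (Polynomial.C (x ^ p)) ^ (n - j) = Polynomial.C (x ^ (p * (n - j))) := by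
    rw [← map_pow, ← pow_mul]
  have e4 : ((Polynomial.C x + Polynomial.X) ^ p) ^ j = (Polynomial.C x + Polynomial.X) ^ (p * j) := by
    rw [← pow_mul]
  have e5 : (-1 : Polynomial A) ^ (n - j) = Polynomial.C ((-1 : A) ^ (n - j)) := by
    rw [map_pow, map_neg, map_one]
  rw [e1, e2, e3, e4, e5]
  simp only [Polynomial.C_mul]
  ring
end
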